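/- arXiv:1412.8137 — 2 statements merged into one kernel-verified Lean document; each statement's English description precedes it below -/
import Mathlib

section
/- The Petersen graph is not determined by its energy among 3-regular graphs on 10 vertices: there exists a 3-regular simple graph on 10 vertices that is not isomorphic to the Petersen graph and whose energy equals 16. -/
open scoped Classical

/-- The energy of a real matrix: the sum of the absolute values of its eigenvalues
(with multiplicity), when the matrix is Hermitian (= symmetric). -/
noncomputable def matrixEnergy {n : Type*} [Fintype n] (A : Matrix n n ℝ) : ℝ :=
  if h : A.IsHermitian then ∑ i, |h.eigenvalues i| else 0

/-- The energy of a finite simple graph: the sum of the absolute values of the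
eigenvalues of its adjacency matrix. -/
noncomputable def SimpleGraph.energy {V : Type*} [Fintype V] (G : SimpleGraph V) : ℝ :=
  matrixEnergy (G.adjMatrix ℝ)

/-- The Randić matrix of a finite simple graph: `(i,j)`-entry `1/√(dᵢ dⱼ)` if `i ~ j`, else `0`. -/
noncomputable def SimpleGraph.randicMatrix {V : Type*} [Fintype V] (G : SimpleGraph V) :
    Matrix V V ℝ :=
  Matrix.of fun i j =>
    if G.Adj i j then 1 / Real.sqrt ((G.degree i : ℝ) * (G.degree j : ℝ)) else 0

/-- The Randić energy of a finite simple graph: the sum of the absolute values of the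
eigenvalues of its Randić matrix. -/
noncomputable def SimpleGraph.randicEnergy {V : Type*} [Fintype V] (G : SimpleGraph V) : ℝ :=
  matrixEnergy G.randicMatrix

/-- The Randić characteristic polynomial `det (λ I - R(G))`. -/
noncomputable def SimpleGraph.randicCharpoly {V : Type*} [Fintype V] (G : SimpleGraph V) :
    Polynomial ℝ :=
  G.randicMatrix.charpoly

/-- The Petersen graph: vertices are the 2-element subsets of a 5-element set, two vertices
being adjacent iff the corresponding subsets are disjoint. -/
def petersenGraph : SimpleGraph {s : Finset (Fin 5) // s.card = 2} where
  Adj s t := Disjoint s.1 t.1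
  symm := ⟨fun s t h => h.symm⟩
  loopless := ⟨fun s h => by
    have h0 : s.1 = ∅ := by simpa using disjoint_self.mp h
    have h2 := s.2
    rw [h0] at h2
    simp at h2⟩

/-! The witness is a cubic graph with spectrum `3, 2, 1, 1, 1, -1, -1, -2, -2, -2`. Its adjacency
matrix `A` is annihilated by `(x - 3)(x - 2)(x - 1)(x + 1)(x + 2)`, and at these five roots
`60 |x| = 36 + 25 x² - x⁴`. Hence `60 E(G) = tr (36 + 25 A² - A⁴) = 960`, a computation with integer
matrices. The graph contains a triangle while the Petersen graph does not. -/
open Polynomial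

namespace Matrix.IsHermitian

variable {𝕜 n : Type*} [RCLike 𝕜] [Fintype n] [DecidableEq n] {A : Matrix n n 𝕜}

theorem trace_cfc (hA : A.IsHermitian) (f : ℝ → ℝ) :
    (cfc f A).trace = ∑ i, (f (hA.eigenvalues i) : 𝕜) := by
  rw [hA.cfc_eq, IsHermitian.cfc, Unitary.conjStarAlgAut_apply, trace_mul_cycle,
    Unitary.coe_star_mul_self, one_mul, trace_diagonal]
  rfl

theorem isRoot_of_mem_spectrum_of_aeval_eq_zero (hA : A.IsHermitian) {q : ℝ[X]}
    (hq : aeval A q = 0) {x : ℝ} (hx : x ∈ spectrum ℝ A) : q.IsRoot x := by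
  have hcfc : cfc q.eval A = cfc (fun _ : ℝ => 0) A := by
    rw [cfc_polynomial q A hA.isSelfAdjoint, hq, cfc_const_zero]
  exact eqOn_of_cfc_eq_cfc (ha := hA.isSelfAdjoint) hcfc (by fun_prop) (by fun_prop) hx

theorem sum_eigenvalues_eq_trace_aeval (hA : A.IsHermitian) {f : ℝ → ℝ} {p q : ℝ[X]}
    (hq : aeval A q = 0) (hf : ∀ x, q.IsRoot x → f x = p.eval x) :
    ∑ i, (f (hA.eigenvalues i) : 𝕜) = (aeval A p).trace := by
  rw [← hA.trace_cfc, ← cfc_polynomial p A hA.isSelfAdjoint]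
  congr 1
  exact cfc_congr fun x hx => hf x (hA.isRoot_of_mem_spectrum_of_aeval_eq_zero hq hx)

end Matrix.IsHermitian

theorem matrixEnergy_eq_sum_abs_eigenvalues {n : Type*} [Fintype n] [DecidableEq n]
    {A : Matrix n n ℝ} (hA : A.IsHermitian) : matrixEnergy A = ∑ i, |hA.eigenvalues i| := by
  rw [matrixEnergy, dif_pos hA]
  congr!

theorem matrixEnergy_eq_of_aeval_eq_zero {n : Type*} [Fintype n] [DecidableEq n]
    {M : Matrix n n ℤ} (hM : M.IsSymm) {p q : ℤ[X]} {d : ℝ} (hd : d ≠ 0)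
    (hq : aeval M q = 0) (hp : ∀ x : ℝ, aeval x q = 0 → d * |x| = aeval x p) :
    matrixEnergy (M.map (↑)) = (aeval M p).trace / d := by
  have hA : (M.map ((↑) : ℤ → ℝ)).IsHermitian := by simpa using hM.map _
  have hcast : ∀ r : ℤ[X], aeval (M.map ((↑) : ℤ → ℝ)) (r.map (algebraMap ℤ ℝ)) =
      (aeval M r).map (↑) := fun r => by
    rw [aeval_map_algebraMap]
    exact aeval_algHom_apply (Int.castRingHom ℝ).mapMatrix.toIntAlgHom M r
  have hsum := hA.sum_eigenvalues_eq_trace_aeval (f := fun x => d * |x|)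
    (p := p.map (algebraMap ℤ ℝ)) (q := q.map (algebraMap ℤ ℝ))
    (by rw [hcast, hq, Matrix.map_zero _ Int.cast_zero])
    fun x hx => by
      rw [IsRoot, eval_map_algebraMap] at hx
      rw [eval_map_algebraMap, hp x hx]
  simp only [RCLike.ofReal_real_eq_id, id, hcast] at hsum
  rw [matrixEnergy_eq_sum_abs_eigenvalues hA, eq_div_iff hd, mul_comm, Finset.mul_sum, hsum]
  simp [Matrix.trace]

theorem SimpleGraph.energy_eq_matrixEnergy_map_adjMatrix {V : Type*} [Fintype V]
    (G : SimpleGraph V) [DecidableRel G.Adj] :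
    G.energy = matrixEnergy ((G.adjMatrix ℤ).map (↑)) := by
  rw [SimpleGraph.energy]
  congr 1
  ext i j
  simp only [SimpleGraph.adjMatrix_apply, Matrix.map_apply]
  split_ifs <;> simp

def equienergeticAdjMatrix : Matrix (Fin 10) (Fin 10) ℤ :=
  !![0, 0, 0, 0, 0, 1, 1, 0, 1, 0;
    0, 0, 1, 1, 0, 0, 0, 1, 0, 0;
    0, 1, 0, 0, 0, 0, 1, 1, 0, 0;
    0, 1, 0, 0, 0, 1, 0, 0, 0, 1;
    0, 0, 0, 0, 0, 0, 0, 1, 1, 1;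
    1, 0, 0, 1, 0, 0, 0, 0, 1, 0;
    1, 0, 1, 0, 0, 0, 0, 0, 0, 1;
    0, 1, 1, 0, 1, 0, 0, 0, 0, 0;
    1, 0, 0, 0, 1, 1, 0, 0, 0, 0;
    0, 0, 0, 1, 1, 0, 1, 0, 0, 0]

theorem isAdjMatrix_equienergeticAdjMatrix : equienergeticAdjMatrix.IsAdjMatrix :=
  Matrix.isAdjMatrix_iff_hadamard.mpr ⟨by decide, by decide, by decide⟩

def equienergeticGraph : SimpleGraph (Fin 10) :=
  isAdjMatrix_equienergeticAdjMatrix.toGraph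

instance : DecidableRel equienergeticGraph.Adj :=
  inferInstanceAs (DecidableRel isAdjMatrix_equienergeticAdjMatrix.toGraph.Adj)

theorem adjMatrix_equienergeticGraph :
    equienergeticGraph.adjMatrix ℤ = equienergeticAdjMatrix :=
  isAdjMatrix_equienergeticAdjMatrix.adjMatrix_toGraph_eq

theorem aeval_equienergeticAdjMatrix_eq_zero :
    aeval equienergeticAdjMatrix ((X - 3) * (X - 2) * (X - 1) * (X + 1) * (X + 2) : ℤ[X]) = 0 := by
  simp only [map_mul, map_sub, map_add, aeval_X, map_ofNat, map_one]
  decide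

theorem trace_aeval_equienergeticAdjMatrix :
    (aeval equienergeticAdjMatrix (36 + 25 * X ^ 2 - X ^ 4 : ℤ[X])).trace = 960 := by
  simp only [map_add, map_sub, map_mul, map_pow, aeval_X, map_ofNat]
  decide

theorem sixty_mul_abs_eq_of_isRoot {x : ℝ}
    (hx : aeval x ((X - 3) * (X - 2) * (X - 1) * (X + 1) * (X + 2) : ℤ[X]) = 0) :
    60 * |x| = aeval x (36 + 25 * X ^ 2 - X ^ 4 : ℤ[X]) := by
  simp only [map_mul, map_sub, map_add, map_pow, aeval_X, map_ofNat, map_one, mul_eq_zero,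
    sub_eq_zero, add_eq_zero_iff_eq_neg] at hx ⊢
  rcases hx with (((rfl | rfl) | rfl) | rfl) | rfl <;> norm_num

theorem equienergeticGraph_energy : equienergeticGraph.energy = 16 := by
  rw [SimpleGraph.energy_eq_matrixEnergy_map_adjMatrix, adjMatrix_equienergeticGraph,
    matrixEnergy_eq_of_aeval_eq_zero isAdjMatrix_equienergeticAdjMatrix.symm (by norm_num)
      aeval_equienergeticAdjMatrix_eq_zero fun _ => sixty_mul_abs_eq_of_isRoot,
    trace_aeval_equienergeticAdjMatrix]
  norm_num

theorem equienergeticGraph_isRegularOfDegree : equienergeticGraph.IsRegularOfDegree 3 := by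
  unfold SimpleGraph.IsRegularOfDegree
  decide

theorem equienergeticGraph_not_cliqueFree_three : ¬ equienergeticGraph.CliqueFree 3 :=
  fun h => h {1, 2, 7} (SimpleGraph.is3Clique_triple_iff.mpr (by decide))

instance : DecidableRel petersenGraph.Adj := fun s t =>
  inferInstanceAs (Decidable (Disjoint s.1 t.1))

theorem petersenGraph_cliqueFree_three : petersenGraph.CliqueFree 3 := by
  intro s hs
  obtain ⟨a, b, c, hab, hac, hbc, -⟩ := SimpleGraph.is3Clique_iff.mp hs
  revert a b c
  decide

theorem petersen_not_energy_unique :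
    ∃ G : SimpleGraph (Fin 10), G.IsRegularOfDegree 3 ∧
      IsEmpty (G ≃g petersenGraph) ∧ G.energy = 16 :=
  ⟨equienergeticGraph, by convert equienergeticGraph_isRegularOfDegree,
    ⟨fun e => equienergeticGraph_not_cliqueFree_three
      (petersenGraph_cliqueFree_three.comap e.isContained)⟩,
    equienergeticGraph_energy⟩
end

section
/- For every n ≥ 1, the Randić energy of the friendship graph F_n is RE(F_n) = n + 1. -/
open scoped Classical

/-- The Dutch windmill graph `D_m^n`, obtained from `n` disjoint copies of the cycle `C_m`
by identifying one vertex from each copy into a single common vertex (the hub `none`).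
Each copy `i` is the cycle `none — (i,0) — (i,1) — ⋯ — (i,m-2) — none`. -/
def dutchWindmill (m n : ℕ) : SimpleGraph (Option (Fin n × Fin (m - 1))) :=
  SimpleGraph.fromRel fun x y =>
    match x, y with
    | none, some (_, j) => j.val = 0 ∨ j.val = m - 2
    | some (i, j), some (i', j') => i = i' ∧ j.val + 1 = j'.val
    | _, _ => False

/-- The friendship graph `F_n`: `n` triangles sharing a single common vertex. -/
def friendshipGraph (n : ℕ) : SimpleGraph (Option (Fin n × Fin 2)) := dutchWindmill 3 n

/-! Let `v = (√dᵢ / √(2|E|))ᵢ`. A direct computation gives `R v = v` and `R² = I/4 + v vᵀ` for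
`R = R(F_n)`, so `(R - 1)(R² - 1/4) = 0` and every eigenvalue of `R` is `1` or `±1/2`. On these
three values `|λ| = (2λ² + 1)/3`, hence `RE(F_n) = (2 tr R² + 2n + 1)/3`, and
`tr R² = (2n + 1)/4 + ‖v‖² = n/2 + 1`. -/

open Matrix Polynomial

namespace Matrix.IsHermitian

variable {𝕜 n : Type*} [RCLike 𝕜] [Fintype n] [DecidableEq n] {A : Matrix n n 𝕜}

theorem eval_eigenvalues_eq_zero (hA : A.IsHermitian) {p : ℝ[X]} (hp : aeval A p = 0) (i : n) :
    p.eval (hA.eigenvalues i) = 0 := by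
  have : Nonempty n := ⟨i⟩
  simpa [hp] using spectrum.subset_polynomial_aeval A p ⟨_, hA.eigenvalues_mem_spectrum_real i, rfl⟩

theorem trace_mul_self (hA : A.IsHermitian) :
    (A * A).trace = ∑ i, ((hA.eigenvalues i ^ 2 : ℝ) : 𝕜) := by
  conv_lhs => rw [hA.spectral_theorem, ← map_mul, Unitary.conjStarAlgAut_apply, trace_mul_cycle,
    Unitary.coe_star_mul_self, one_mul, diagonal_mul_diagonal, trace_diagonal]
  simp [sq]

end Matrix.IsHermitian

theorem matrixEnergy_eq_of_sub_one_mul_sq_sub_eq_zero {n : Type*} [Fintype n]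
    {A : Matrix n n ℝ} (hA : A.IsHermitian) (h : (A - 1) * (A ^ 2 - (1 / 4 : ℝ) • 1) = 0) :
    matrixEnergy A = 2 / 3 * (A * A).trace + Fintype.card n / 3 := by
  have habs (i : n) : |hA.eigenvalues i| = 2 / 3 * hA.eigenvalues i ^ 2 + 1 / 3 := by
    have hroot := hA.eval_eigenvalues_eq_zero (p := (X - 1) * (X ^ 2 - C (1 / 4)))
      (by simpa [Algebra.algebraMap_eq_smul_one] using h) i
    simp only [eval_mul, eval_sub, eval_X, eval_one, eval_pow, eval_C] at hroot
    have hfactor :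
        (hA.eigenvalues i - 1) * (hA.eigenvalues i - 1 / 2) * (hA.eigenvalues i + 1 / 2) = 0 := by
      linear_combination hroot
    rcases mul_eq_zero.1 hfactor with h | h
    · rcases mul_eq_zero.1 h with h | h <;> rw [sub_eq_zero.1 h] <;> norm_num
    · rw [eq_neg_of_add_eq_zero_left h]; norm_num
  rw [matrixEnergy, dif_pos hA, hA.trace_mul_self, Finset.sum_congr rfl fun i _ => habs i,
    Finset.sum_add_distrib, ← Finset.mul_sum, Finset.sum_const, Finset.card_univ, nsmul_eq_mul]
  simp only [RCLike.ofReal_real_eq_id, id_eq]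
  ring

theorem SimpleGraph.isHermitian_randicMatrix {V : Type*} [Fintype V] (G : SimpleGraph V) :
    G.randicMatrix.IsHermitian := by
  ext i j
  simp [randicMatrix, G.adj_comm, mul_comm]

namespace friendshipGraph

variable {n : ℕ}

/-- The other non-hub vertex of the triangle containing `some p`. -/
def mate (p : Fin n × Fin 2) : Fin n × Fin 2 := (p.1, p.2 + 1)

theorem mate_involutive : Function.Involutive (mate (n := n)) := by
  rintro ⟨i, j⟩
  simp only [mate, Prod.mk.injEq, true_and]
  revert j; decide

@[simp]
theorem mate_inj {p q : Fin n × Fin 2} : mate p = mate q ↔ p = q :=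
  mate_involutive.injective.eq_iff

theorem eq_mate_comm {p q : Fin n × Fin 2} : q = mate p ↔ p = mate q := by
  rw [eq_comm, mate_involutive.eq_iff]

theorem adj_none_some (p : Fin n × Fin 2) : (friendshipGraph n).Adj none (some p) := by
  simp only [friendshipGraph, dutchWindmill, SimpleGraph.fromRel_adj]
  exact ⟨by simp, by omega⟩

theorem adj_some_some (p q : Fin n × Fin 2) :
    (friendshipGraph n).Adj (some p) (some q) ↔ q = mate p := by
  obtain ⟨i, j⟩ := p
  obtain ⟨i', j'⟩ := q
  simp only [friendshipGraph, dutchWindmill, SimpleGraph.fromRel_adj, mate, Prod.mk.injEq]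
  fin_cases j <;> fin_cases j' <;> simp [eq_comm]

theorem neighborFinset_none :
    (friendshipGraph n).neighborFinset none = Finset.univ.map Function.Embedding.some := by
  ext (_ | p)
  · simp
  · simp [adj_none_some]

theorem neighborFinset_some (p : Fin n × Fin 2) :
    (friendshipGraph n).neighborFinset (some p) = {none, some (mate p)} := by
  ext (_ | q)
  · simp [SimpleGraph.adj_comm, adj_none_some]
  · simp [adj_some_some]

theorem degree_none : (friendshipGraph n).degree none = 2 * n := by
  simp [← SimpleGraph.card_neighborFinset_eq_degree, neighborFinset_none, mul_comm]

theorem degree_some (p : Fin n × Fin 2) : (friendshipGraph n).degree (some p) = 2 := by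
  simp [← SimpleGraph.card_neighborFinset_eq_degree, neighborFinset_some]

@[simp]
theorem randicMatrix_none_none : (friendshipGraph n).randicMatrix none none = 0 := by
  simp [SimpleGraph.randicMatrix]

theorem sqrt_degree_none_mul_degree_some (p : Fin n × Fin 2) :
    √((friendshipGraph n).degree none * (friendshipGraph n).degree (some p) : ℝ) = 2 * √n := by
  rw [degree_none, degree_some, show ((2 * n : ℕ) * (2 : ℕ) : ℝ) = 2 ^ 2 * n by push_cast; ring,
    Real.sqrt_mul (by positivity), Real.sqrt_sq zero_le_two]

@[simp]
theorem randicMatrix_none_some (p : Fin n × Fin 2) :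
    (friendshipGraph n).randicMatrix none (some p) = 1 / (2 * √n) := by
  rw [SimpleGraph.randicMatrix, of_apply, if_pos (adj_none_some p),
    sqrt_degree_none_mul_degree_some]

@[simp]
theorem randicMatrix_some_none (p : Fin n × Fin 2) :
    (friendshipGraph n).randicMatrix (some p) none = 1 / (2 * √n) := by
  rw [SimpleGraph.randicMatrix, of_apply, if_pos (adj_none_some p).symm, mul_comm,
    sqrt_degree_none_mul_degree_some]

@[simp]
theorem randicMatrix_some_some (p q : Fin n × Fin 2) :
    (friendshipGraph n).randicMatrix (some p) (some q) = if q = mate p then 1 / 2 else 0 := by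
  simp only [SimpleGraph.randicMatrix, of_apply, adj_some_some, degree_some]
  norm_num

/-- The Perron vector `(√dᵢ / √(2|E|))ᵢ` of the Randić matrix of `F_n`. -/
noncomputable def perronVector (n : ℕ) : Option (Fin n × Fin 2) → ℝ :=
  fun x => x.elim (1 / 2) fun _ => 1 / (2 * √n)

@[simp]
theorem perronVector_none : perronVector n none = 1 / 2 := rfl

@[simp]
theorem perronVector_some (p : Fin n × Fin 2) : perronVector n (some p) = 1 / (2 * √n) := rfl

theorem randicMatrix_mulVec_perronVector (hn : n ≠ 0) :
    (friendshipGraph n).randicMatrix *ᵥ perronVector n = perronVector n := by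
  ext (_ | p)
  · simp only [mulVec, dotProduct, Fintype.sum_option, randicMatrix_none_none,
      randicMatrix_none_some, perronVector_none, perronVector_some, Finset.sum_const,
      Finset.card_univ, Fintype.card_prod, Fintype.card_fin, nsmul_eq_mul, Nat.cast_mul,
      Nat.cast_ofNat]
    field_simp
    rw [Real.sq_sqrt n.cast_nonneg]
    ring
  · simp only [mulVec, dotProduct, Fintype.sum_option, randicMatrix_some_none,
      randicMatrix_some_some, perronVector_none, perronVector_some, ite_mul, zero_mul,
      Finset.sum_ite_eq', Finset.mem_univ, if_true]
    ring

theorem randicMatrix_mul_self (hn : n ≠ 0) :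
    (friendshipGraph n).randicMatrix * (friendshipGraph n).randicMatrix =
      (1 / 4 : ℝ) • 1 + vecMulVec (perronVector n) (perronVector n) := by
  ext (_ | p) (_ | q) <;>
    simp only [mul_apply, Fintype.sum_option, Matrix.add_apply, Matrix.smul_apply,
      vecMulVec_apply, smul_eq_mul, randicMatrix_none_none, randicMatrix_none_some,
      randicMatrix_some_none, randicMatrix_some_some, perronVector_none, perronVector_some]
  · simp only [Finset.sum_const, Finset.card_univ, Fintype.card_prod, Fintype.card_fin,
      nsmul_eq_mul, Nat.cast_mul, Nat.cast_ofNat, one_apply_eq]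
    field_simp
    rw [Real.sq_sqrt n.cast_nonneg]
    ring
  · simp only [eq_mate_comm (q := q), mul_ite, mul_zero, Finset.sum_ite_eq', Finset.mem_univ,
      if_true, one_apply_ne (Option.some_ne_none q).symm]
    ring
  · simp only [ite_mul, zero_mul, Finset.sum_ite_eq', Finset.mem_univ, if_true,
      one_apply_ne (Option.some_ne_none p)]
    ring
  · simp only [eq_mate_comm (q := q), ite_mul, mul_ite, zero_mul, mul_zero, Finset.sum_ite_eq',
      Finset.mem_univ, if_true, mate_inj, one_apply, Option.some_inj, eq_comm (a := q)]
    split_ifs <;> ring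

theorem randicMatrix_cubic_eq_zero (hn : n ≠ 0) :
    ((friendshipGraph n).randicMatrix - 1) *
      ((friendshipGraph n).randicMatrix ^ 2 - (1 / 4 : ℝ) • 1) = 0 := by
  rw [sq, randicMatrix_mul_self hn, add_sub_cancel_left, sub_mul, mul_vecMulVec,
    randicMatrix_mulVec_perronVector hn, one_mul, sub_self]

theorem trace_randicMatrix_mul_self (hn : n ≠ 0) :
    ((friendshipGraph n).randicMatrix * (friendshipGraph n).randicMatrix).trace = n / 2 + 1 := by
  rw [randicMatrix_mul_self hn, trace_add, trace_smul, trace_one, trace_vecMulVec]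
  simp only [dotProduct, Fintype.sum_option, perronVector_none, perronVector_some, Finset.sum_const,
    Finset.card_univ, Fintype.card_option, Fintype.card_prod, Fintype.card_fin, nsmul_eq_mul,
    smul_eq_mul, Nat.cast_add, Nat.cast_mul, Nat.cast_ofNat, Nat.cast_one]
  field_simp
  rw [Real.sq_sqrt n.cast_nonneg]
  ring

end friendshipGraph

theorem randicEnergy_friendshipGraph (n : ℕ) (hn : 1 ≤ n) :
    (friendshipGraph n).randicEnergy = n + 1 := by
  have hn₀ : n ≠ 0 := Nat.one_le_iff_ne_zero.mp hn
  -- `matrixEnergy` uses the classical `DecidableEq` instance, hence `convert`.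
  rw [SimpleGraph.randicEnergy, matrixEnergy_eq_of_sub_one_mul_sq_sub_eq_zero
    (friendshipGraph n).isHermitian_randicMatrix
    (by convert friendshipGraph.randicMatrix_cubic_eq_zero hn₀),
    friendshipGraph.trace_randicMatrix_mul_self hn₀, Fintype.card_option, Fintype.card_prod,
    Fintype.card_fin, Fintype.card_fin]
  push_cast
  ring
end
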